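/- arXiv:1412.7116 — 6 statements merged into one kernel-verified Lean document; each statement's English description precedes it below -/
import Mathlib

section
/- Let L ∈ ℝ^{n×n} be a matrix with L_{ij} ≤ 0 for all i ≠ j and with every row summing to zero (L·𝟏 = 0). Suppose v ∈ ℝ^n has strictly positive entries and satisfies vᵀL = 0, and let ε be a real number with ε > max_{i∈[n]} v_i L_{ii}. Then the matrix P = I − (1/ε)·diag(v)·L is doubly stochastic, i.e., all entries of P are nonnegative and every row and every column of P sums to 1. -/
/-- If `L` has nonpositive off-diagonal entries, zero row sums, a positive
left null vector `v`, and `ε > max_i v_i L_{ii}`, then `P = I - (1/ε) diag(v) L` is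
doubly stochastic. -/
theorem stmt_0 {n : ℕ} (L : Matrix (Fin n) (Fin n) ℝ) (v : Fin n → ℝ) (ε : ℝ)
    (hoff : ∀ i j : Fin n, i ≠ j → L i j ≤ 0)
    (hrow : ∀ i : Fin n, ∑ j, L i j = 0)
    (hv : ∀ i, 0 < v i)
    (hvL : ∀ j : Fin n, ∑ i, v i * L i j = 0)
    (hε : ∀ i : Fin n, v i * L i i < ε) :
    (∀ i j, 0 ≤ ((1 : Matrix (Fin n) (Fin n) ℝ) - ε⁻¹ • (Matrix.diagonal v * L)) i j) ∧
    (∀ i, ∑ j, ((1 : Matrix (Fin n) (Fin n) ℝ) - ε⁻¹ • (Matrix.diagonal v * L)) i j = 1) ∧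
    (∀ j, ∑ i, ((1 : Matrix (Fin n) (Fin n) ℝ) - ε⁻¹ • (Matrix.diagonal v * L)) i j = 1) := by
  have hP : ∀ i j, ((1 : Matrix (Fin n) (Fin n) ℝ) - ε⁻¹ • (Matrix.diagonal v * L)) i j
      = (if i = j then (1:ℝ) else 0) - ε⁻¹ * (v i * L i j) := by
    intro i j
    simp [Matrix.sub_apply, Matrix.one_apply, Matrix.smul_apply, Matrix.diagonal_mul]
  have hLdiag : ∀ i : Fin n, 0 ≤ L i i := by
    intro i
    have h1 : L i i = -∑ j ∈ Finset.univ.erase i, L i j := by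
      have := hrow i
      rw [← Finset.add_sum_erase _ _ (Finset.mem_univ i)] at this
      linarith
    rw [h1]
    have : ∑ j ∈ Finset.univ.erase i, L i j ≤ 0 :=
      Finset.sum_nonpos fun j hj => hoff i j (Ne.symm (Finset.ne_of_mem_erase hj))
    linarith
  have hε0 : ∀ _ : Fin n, 0 < ε := fun i =>
    lt_of_le_of_lt (mul_nonneg (hv i).le (hLdiag i)) (hε i)
  refine ⟨?_, ?_, ?_⟩
  · intro i j
    rw [hP]
    by_cases h : i = j
    · subst h
      simp only [if_pos rfl]
      have h1 : ε⁻¹ * (v i * L i i) < ε⁻¹ * ε := by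
        exact mul_lt_mul_of_pos_left (hε i) (inv_pos.mpr (hε0 i))
      rw [inv_mul_cancel₀ (hε0 i).ne'] at h1
      simp only [if_true]
      linarith
    · simp only [if_neg h]
      have : v i * L i j ≤ 0 := mul_nonpos_of_nonneg_of_nonpos (hv i).le (hoff i j h)
      have h2 : 0 ≤ ε⁻¹ := (inv_pos.mpr (hε0 i)).le
      nlinarith
  · intro i
    simp only [hP]
    rw [Finset.sum_sub_distrib]
    have h1 : ∑ j, (if i = j then (1:ℝ) else 0) = 1 := by simp
    have h2 : ∑ j, ε⁻¹ * (v i * L i j) = 0 := by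
      rw [← Finset.mul_sum, ← Finset.mul_sum, hrow i, mul_zero, mul_zero]
    rw [h1, h2, sub_zero]
  · intro j
    simp only [hP]
    rw [Finset.sum_sub_distrib]
    have h1 : ∑ i, (if i = j then (1:ℝ) else 0) = 1 := by simp
    have h2 : ∑ i, ε⁻¹ * (v i * L i j) = 0 := by
      rw [← Finset.mul_sum, hvL j, mul_zero]
    rw [h1, h2, sub_zero]
end

section
/- Let P ∈ ℝ^{n×n} be a doubly stochastic matrix with second largest singular value σ₂(P), let x ∈ ℝ^n be a probability vector (all entries nonnegative and summing to 1), and let t be a nonnegative integer. Then ‖Pᵗx − (1/n)𝟏‖₁ ≤ σ₂(P)ᵗ·√n, where ‖·‖₁ is the ℓ¹ norm and 𝟏 ∈ ℝ^n is the all-ones vector. -/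
/-- The singular values of a square real matrix `M`, namely the square roots of the
eigenvalues of the Hermitian matrix `M * Mᴴ` (with multiplicity, in arbitrary order). -/
noncomputable def singVals {n : ℕ} (M : Matrix (Fin n) (Fin n) ℝ) : Fin n → ℝ :=
  fun i => Real.sqrt ((Matrix.isHermitian_mul_conjTranspose_self M).eigenvalues i)

/-- The second largest singular value (with multiplicity) of a square real matrix:
the supremum, over all pairs of distinct indices, of the smaller of the two
corresponding singular values. -/
noncomputable def sigma2 {n : ℕ} (M : Matrix (Fin n) (Fin n) ℝ) : ℝ :=
  sSup {s : ℝ | ∃ i j : Fin n, i ≠ j ∧ s = min (singVals M i) (singVals M j)}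

/-! Write `y = x - 𝟏/n`. Since `P𝟏 = 𝟏` and `𝟏 ⊥ y`, we have `Pᵗx - 𝟏/n = Pᵗy`, `Pᵗy ⊥ 𝟏` and
`‖y‖₂ ≤ ‖x‖₂ ≤ ‖x‖₁ = 1`. On `𝟏^⊥` the matrix `P` shrinks Euclidean norms by the factor `σ₂(P)`:
the eigenvalues of `PPᵀ` lie in `[0, 1]` and `𝟏` is an eigenvector for `1`, so at most one
eigenvalue exceeds `σ₂²`, and if one does then `𝟏` is parallel to its eigenvector; expanding
`z ⊥ 𝟏` in an eigenbasis gives `‖Pᵀz‖ ≤ σ₂‖z‖`, and `‖Pz‖² = ⟨Pᵀ(Pz), z⟩` transfers this to `P`.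
Finally `‖v‖₁ ≤ √n ‖v‖₂`. -/

open Matrix Finset

theorem OrthonormalBasis.sum_dotProduct_mul_dotProduct {ι : Type*} [Fintype ι]
    (b : OrthonormalBasis ι ℝ (EuclideanSpace ℝ ι)) (v w : ι → ℝ) :
    ∑ i, (⇑(b i) ⬝ᵥ v) * (⇑(b i) ⬝ᵥ w) = v ⬝ᵥ w := by
  have hinner (i : ι) (u : ι → ℝ) : ⇑(b i) ⬝ᵥ u = inner ℝ (b i) (WithLp.toLp 2 u) := by
    simp [EuclideanSpace.inner_eq_star_dotProduct, dotProduct_comm]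
  simp only [hinner, ← real_inner_comm (b _) (WithLp.toLp 2 v)]
  rw [b.sum_inner_mul_inner, EuclideanSpace.inner_toLp_toLp]
  simp [dotProduct_comm]

namespace Matrix.IsHermitian

variable {ι : Type*} [Fintype ι] [DecidableEq ι] {A : Matrix ι ι ℝ} (hA : A.IsHermitian)

theorem eigenvectorBasis_dotProduct_mulVec (i : ι) (w : ι → ℝ) :
    ⇑(hA.eigenvectorBasis i) ⬝ᵥ (A *ᵥ w) = hA.eigenvalues i * (⇑(hA.eigenvectorBasis i) ⬝ᵥ w) := by
  have hvecMul (v : ι → ℝ) : v ᵥ* A = A *ᵥ v := by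
    rw [← vecMul_transpose, show Aᵀ = A by simpa using hA.eq]
  rw [dotProduct_mulVec, hvecMul, mulVec_eigenvectorBasis, smul_dotProduct,
    smul_eq_mul]

theorem dotProduct_mulVec_eq_sum_eigenvalues (z : ι → ℝ) :
    z ⬝ᵥ (A *ᵥ z) = ∑ i, hA.eigenvalues i * (⇑(hA.eigenvectorBasis i) ⬝ᵥ z) ^ 2 := by
  rw [← hA.eigenvectorBasis.sum_dotProduct_mul_dotProduct]
  simp only [eigenvectorBasis_dotProduct_mulVec hA]
  exact sum_congr rfl fun i _ => by ring

theorem dotProduct_mulVec_le_of_dotProduct_eq_zero {μ s : ℝ} {u : ι → ℝ} (hu : u ≠ 0)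
    (hAu : A *ᵥ u = μ • u) (hμ : ∀ i, hA.eigenvalues i ≤ μ)
    (hs : ∀ i j, i ≠ j → min (hA.eigenvalues i) (hA.eigenvalues j) ≤ s)
    {z : ι → ℝ} (hz : u ⬝ᵥ z = 0) : z ⬝ᵥ (A *ᵥ z) ≤ s * (z ⬝ᵥ z) := by
  set b := hA.eigenvectorBasis
  set ev := hA.eigenvalues
  have hd (i : ι) (hi : ⇑(b i) ⬝ᵥ u ≠ 0) : ev i = μ := by
    have := hA.eigenvectorBasis_dotProduct_mulVec i u
    rw [hAu, dotProduct_smul, smul_eq_mul] at this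
    exact (mul_right_cancel₀ hi this).symm
  have hterm (i : ι) : ev i * (⇑(b i) ⬝ᵥ z) ^ 2 ≤ s * (⇑(b i) ⬝ᵥ z) ^ 2 := by
    rcases le_or_gt (ev i) s with hi | hi
    · exact mul_le_mul_of_nonneg_right hi (sq_nonneg _)
    suffices ⇑(b i) ⬝ᵥ z = 0 by simp [this]
    have hother (j : ι) (hj : j ≠ i) : ⇑(b j) ⬝ᵥ u = 0 := by
      by_contra h
      have := hs j i hj
      rw [hd j h, min_eq_right (hμ i)] at this
      linarith
    have hsum := b.sum_dotProduct_mul_dotProduct u z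
    rw [hz, sum_eq_single i (fun j _ hj => by rw [hother j hj, zero_mul]) (by simp)] at hsum
    have hui : ⇑(b i) ⬝ᵥ u ≠ 0 := by
      intro h0
      apply hu
      rw [← dotProduct_self_eq_zero, ← b.sum_dotProduct_mul_dotProduct]
      exact sum_eq_zero fun j _ => by
        rcases eq_or_ne j i with rfl | hj
        · rw [h0, zero_mul]
        · rw [hother j hj, zero_mul]
    exact (mul_eq_zero.1 hsum).resolve_left hui
  rw [hA.dotProduct_mulVec_eq_sum_eigenvalues, ← b.sum_dotProduct_mul_dotProduct z z, mul_sum]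
  exact sum_le_sum fun i _ => by simpa only [sq] using hterm i

theorem eigenvalues_le_one_of_dotProduct_mulVec_le (hle : ∀ z, z ⬝ᵥ (A *ᵥ z) ≤ z ⬝ᵥ z) (i : ι) :
    hA.eigenvalues i ≤ 1 := by
  have hnorm : ⇑(hA.eigenvectorBasis i) ⬝ᵥ ⇑(hA.eigenvectorBasis i) = 1 := by
    have := real_inner_self_eq_norm_sq (hA.eigenvectorBasis i)
    rw [hA.eigenvectorBasis.orthonormal.1 i, EuclideanSpace.inner_eq_star_dotProduct] at this
    simpa using this
  have := hle (hA.eigenvectorBasis i)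
  rwa [eigenvectorBasis_dotProduct_mulVec hA, hnorm, mul_one] at this

end Matrix.IsHermitian

section sigma2

variable {n : ℕ} (M : Matrix (Fin n) (Fin n) ℝ)

theorem sigma2_nonneg : 0 ≤ sigma2 M :=
  Real.sSup_nonneg fun _ ⟨_, _, _, hs⟩ => hs ▸ le_min (Real.sqrt_nonneg _) (Real.sqrt_nonneg _)

theorem min_singVals_le_sigma2 {i j : Fin n} (hij : i ≠ j) :
    min (singVals M i) (singVals M j) ≤ sigma2 M := by
  refine le_csSup (Set.Finite.bddAbove ?_) ⟨i, j, hij, rfl⟩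
  refine (Set.finite_range fun p : Fin n × Fin n => min (singVals M p.1) (singVals M p.2)).subset ?_
  rintro _ ⟨i, j, -, rfl⟩
  exact ⟨(i, j), rfl⟩

theorem min_eigenvalues_le_sigma2_sq {i j : Fin n} (hij : i ≠ j) :
    min ((isHermitian_mul_conjTranspose_self M).eigenvalues i)
      ((isHermitian_mul_conjTranspose_self M).eigenvalues j) ≤ sigma2 M ^ 2 := by
  rw [← Real.sqrt_le_left (sigma2_nonneg M), Real.sqrt_monotone.map_min]
  exact min_singVals_le_sigma2 M hij

end sigma2

namespace Matrix

theorem dotProduct_self_mulVec_le_of_transpose_mulVec_le {ι : Type*} [Fintype ι]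
    {B : Matrix ι ι ℝ} {s : ℝ} (hs : 0 ≤ s) (z : ι → ℝ)
    (hB : (Bᵀ *ᵥ (B *ᵥ z)) ⬝ᵥ (Bᵀ *ᵥ (B *ᵥ z)) ≤ s * ((B *ᵥ z) ⬝ᵥ (B *ᵥ z))) :
    (B *ᵥ z) ⬝ᵥ (B *ᵥ z) ≤ s * (z ⬝ᵥ z) := by
  have hnonneg (v : ι → ℝ) : 0 ≤ v ⬝ᵥ v := sum_nonneg fun i _ => mul_self_nonneg (v i)
  set w := B *ᵥ z
  have hw : w ⬝ᵥ w = (Bᵀ *ᵥ w) ⬝ᵥ z := by rw [mulVec_transpose, ← dotProduct_mulVec]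
  have hcs : (w ⬝ᵥ w) ^ 2 ≤ s * (w ⬝ᵥ w) * (z ⬝ᵥ z) := by
    calc (w ⬝ᵥ w) ^ 2 = ((Bᵀ *ᵥ w) ⬝ᵥ z) ^ 2 := by rw [hw]
      _ ≤ ((Bᵀ *ᵥ w) ⬝ᵥ (Bᵀ *ᵥ w)) * (z ⬝ᵥ z) := by
          simpa only [dotProduct, sq] using sum_mul_sq_le_sq_mul_sq univ (Bᵀ *ᵥ w) z
      _ ≤ s * (w ⬝ᵥ w) * (z ⬝ᵥ z) := mul_le_mul_of_nonneg_right hB (hnonneg z)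
  rcases (hnonneg w).eq_or_lt with h | h
  · rw [← h]; exact mul_nonneg hs (hnonneg z)
  · nlinarith

theorem dotProduct_self_le_dotProduct_self_add_smul_one {ι : Type*} [Fintype ι] {y : ι → ℝ}
    (hy : 1 ⬝ᵥ y = 0) (c : ℝ) : y ⬝ᵥ y ≤ (y + c • 1) ⬝ᵥ (y + c • 1) := by
  have h1 : (0 : ℝ) ≤ (1 : ι → ℝ) ⬝ᵥ 1 := sum_nonneg fun _ _ => by norm_num
  simp only [add_dotProduct, dotProduct_add, smul_dotProduct, dotProduct_smul, dotProduct_comm y 1,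
    hy, smul_eq_mul]
  nlinarith [mul_nonneg (sq_nonneg c) h1]

theorem sum_abs_le_sqrt_card_mul_sqrt_dotProduct_self {ι : Type*} [Fintype ι] (v : ι → ℝ) :
    ∑ i, |v i| ≤ √(Fintype.card ι) * √(v ⬝ᵥ v) := by
  rw [← Real.sqrt_mul (Nat.cast_nonneg _)]
  apply Real.le_sqrt_of_sq_le
  simpa only [dotProduct, abs_mul_abs_self, card_univ, sq] using
    sq_sum_le_card_mul_sum_sq (s := univ) (f := fun i => |v i|)

variable {ι : Type*} [Fintype ι] [DecidableEq ι]

theorem dotProduct_self_mulVec_le_of_mem_doublyStochastic {M : Matrix ι ι ℝ}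
    (hM : M ∈ doublyStochastic ℝ ι) (z : ι → ℝ) : (M *ᵥ z) ⬝ᵥ (M *ᵥ z) ≤ z ⬝ᵥ z := by
  have hrow (i : ι) : (M *ᵥ z) i ^ 2 ≤ ∑ j, M i j * z j ^ 2 := by
    calc (M *ᵥ z) i ^ 2 = (∑ j, M i j * z j) ^ 2 := rfl
      _ ≤ (∑ j, M i j) * ∑ j, M i j * z j ^ 2 :=
        sum_sq_le_sum_mul_sum_of_sq_le_mul _ (fun j _ => hM.1 i j)
          (fun j _ => mul_nonneg (hM.1 i j) (sq_nonneg _)) (fun j _ => (by ring : _ = _).le)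
      _ = ∑ j, M i j * z j ^ 2 := by rw [sum_row_of_mem_doublyStochastic hM, one_mul]
  calc (M *ᵥ z) ⬝ᵥ (M *ᵥ z) = ∑ i, (M *ᵥ z) i ^ 2 := by simp only [dotProduct, sq]
    _ ≤ ∑ i, ∑ j, M i j * z j ^ 2 := sum_le_sum fun i _ => hrow i
    _ = ∑ j, (∑ i, M i j) * z j ^ 2 := by rw [sum_comm]; simp only [sum_mul]
    _ = z ⬝ᵥ z := by simp only [sum_col_of_mem_doublyStochastic hM, one_mul, dotProduct, sq]

theorem one_dotProduct_mulVec_of_mem_doublyStochastic {M : Matrix ι ι ℝ}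
    (hM : M ∈ doublyStochastic ℝ ι) (z : ι → ℝ) : 1 ⬝ᵥ (M *ᵥ z) = 1 ⬝ᵥ z := by
  rw [dotProduct_mulVec, one_vecMul_of_mem_doublyStochastic hM]

end Matrix

section doublyStochastic

variable {n : ℕ} {P : Matrix (Fin n) (Fin n) ℝ}

theorem dotProduct_self_transpose_mulVec_le_sigma2_sq (hP : P ∈ doublyStochastic ℝ (Fin n))
    {z : Fin n → ℝ} (hz : 1 ⬝ᵥ z = 0) :
    (Pᵀ *ᵥ z) ⬝ᵥ (Pᵀ *ᵥ z) ≤ sigma2 P ^ 2 * (z ⬝ᵥ z) := by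
  rcases isEmpty_or_nonempty (Fin n) with _ | _
  · simp [dotProduct]
  have hA := isHermitian_mul_conjTranspose_self P
  have hPT : Pᵀ ∈ doublyStochastic ℝ (Fin n) := transpose_mem_doublyStochastic_iff.2 hP
  have hquad (w : Fin n → ℝ) : w ⬝ᵥ ((P * Pᴴ) *ᵥ w) = (Pᵀ *ᵥ w) ⬝ᵥ (Pᵀ *ᵥ w) := by
    rw [conjTranspose_eq_transpose_of_trivial, ← mulVec_mulVec, dotProduct_mulVec,
      ← mulVec_transpose]
  rw [← hquad]
  refine hA.dotProduct_mulVec_le_of_dotProduct_eq_zero one_ne_zero (μ := 1) ?_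
    (hA.eigenvalues_le_one_of_dotProduct_mulVec_le fun w => ?_)
    (fun i j hij => min_eigenvalues_le_sigma2_sq P hij) hz
  · rw [conjTranspose_eq_transpose_of_trivial, ← mulVec_mulVec,
      mulVec_one_of_mem_doublyStochastic hPT, mulVec_one_of_mem_doublyStochastic hP, one_smul]
  · rw [hquad]
    exact dotProduct_self_mulVec_le_of_mem_doublyStochastic hPT w

theorem dotProduct_self_mulVec_le_sigma2_sq (hP : P ∈ doublyStochastic ℝ (Fin n))
    {z : Fin n → ℝ} (hz : 1 ⬝ᵥ z = 0) :
    (P *ᵥ z) ⬝ᵥ (P *ᵥ z) ≤ sigma2 P ^ 2 * (z ⬝ᵥ z) :=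
  dotProduct_self_mulVec_le_of_transpose_mulVec_le (sq_nonneg _) z <|
    dotProduct_self_transpose_mulVec_le_sigma2_sq hP <|
      (one_dotProduct_mulVec_of_mem_doublyStochastic hP z).trans hz

theorem dotProduct_self_pow_mulVec_le_sigma2_sq_pow (hP : P ∈ doublyStochastic ℝ (Fin n))
    {z : Fin n → ℝ} (hz : 1 ⬝ᵥ z = 0) (t : ℕ) :
    (P ^ t *ᵥ z) ⬝ᵥ (P ^ t *ᵥ z) ≤ (sigma2 P ^ 2) ^ t * (z ⬝ᵥ z) := by
  induction t with
  | zero => simp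
  | succ t ih =>
    have hzt : 1 ⬝ᵥ (P ^ t *ᵥ z) = 0 :=
      (one_dotProduct_mulVec_of_mem_doublyStochastic (pow_mem hP t) z).trans hz
    calc (P ^ (t + 1) *ᵥ z) ⬝ᵥ (P ^ (t + 1) *ᵥ z)
        = (P *ᵥ (P ^ t *ᵥ z)) ⬝ᵥ (P *ᵥ (P ^ t *ᵥ z)) := by rw [pow_succ', ← mulVec_mulVec]
      _ ≤ sigma2 P ^ 2 * ((P ^ t *ᵥ z) ⬝ᵥ (P ^ t *ᵥ z)) :=
        dotProduct_self_mulVec_le_sigma2_sq hP hzt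
      _ ≤ sigma2 P ^ 2 * ((sigma2 P ^ 2) ^ t * (z ⬝ᵥ z)) :=
        mul_le_mul_of_nonneg_left ih (sq_nonneg _)
      _ = (sigma2 P ^ 2) ^ (t + 1) * (z ⬝ᵥ z) := by ring

end doublyStochastic

theorem one_dotProduct_sub_mean {n : ℕ} {x : Fin n → ℝ} (hx1 : ∑ i, x i = 1) :
    1 ⬝ᵥ (x - (1 / n : ℝ) • 1) = 0 := by
  have hn : (n : ℝ) ≠ 0 := by
    rintro h
    rw [Nat.cast_eq_zero] at h
    subst h
    simp at hx1
  simp [dotProduct_sub, one_dotProduct, hx1, hn]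

theorem dotProduct_self_sub_mean_le_one {n : ℕ} {x : Fin n → ℝ} (hx : ∀ i, 0 ≤ x i)
    (hx1 : ∑ i, x i = 1) : (x - (1 / n : ℝ) • 1) ⬝ᵥ (x - (1 / n : ℝ) • 1) ≤ 1 :=
  calc (x - (1 / n : ℝ) • 1) ⬝ᵥ (x - (1 / n : ℝ) • 1) ≤ x ⬝ᵥ x := by
        simpa using dotProduct_self_le_dotProduct_self_add_smul_one (one_dotProduct_sub_mean hx1)
          (1 / n : ℝ)
    _ ≤ (∑ i, x i) ^ 2 := by
        simpa only [dotProduct, sq] using sum_sq_le_sq_sum_of_nonneg fun i _ => hx i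
    _ = 1 := by rw [hx1, one_pow]

/-- for a doubly stochastic `P`, a probability vector `x` and `t ≥ 0`,
`‖Pᵗ x - (1/n) 𝟏‖₁ ≤ σ₂(P)ᵗ √n`. -/
theorem stmt_4 {n : ℕ} (P : Matrix (Fin n) (Fin n) ℝ)
    (hnonneg : ∀ i j, 0 ≤ P i j)
    (hrow : ∀ i, ∑ j, P i j = 1)
    (hcol : ∀ j, ∑ i, P i j = 1)
    (x : Fin n → ℝ) (hx : ∀ i, 0 ≤ x i) (hx1 : ∑ i, x i = 1) (t : ℕ) :
    ∑ i, |(P ^ t).mulVec x i - 1 / n| ≤ sigma2 P ^ t * Real.sqrt n := by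
  have hP : P ∈ doublyStochastic ℝ (Fin n) := mem_doublyStochastic_iff_sum.2 ⟨hnonneg, hrow, hcol⟩
  set y := x - (1 / n : ℝ) • 1
  have hPy : P ^ t *ᵥ x - (1 / n : ℝ) • 1 = P ^ t *ᵥ y := by
    rw [mulVec_sub, mulVec_smul, mulVec_one_of_mem_doublyStochastic (pow_mem hP t)]
  have hσ : (P ^ t *ᵥ y) ⬝ᵥ (P ^ t *ᵥ y) ≤ (sigma2 P ^ t) ^ 2 :=
    calc (P ^ t *ᵥ y) ⬝ᵥ (P ^ t *ᵥ y) ≤ (sigma2 P ^ 2) ^ t * (y ⬝ᵥ y) :=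
          dotProduct_self_pow_mulVec_le_sigma2_sq_pow hP (one_dotProduct_sub_mean hx1) t
      _ ≤ (sigma2 P ^ 2) ^ t :=
          mul_le_of_le_one_right (by positivity) (dotProduct_self_sub_mean_le_one hx hx1)
      _ = (sigma2 P ^ t) ^ 2 := by ring
  calc ∑ i, |(P ^ t *ᵥ x) i - 1 / n| = ∑ i, |(P ^ t *ᵥ y) i| := by simp [← hPy]
    _ ≤ √n * √((P ^ t *ᵥ y) ⬝ᵥ (P ^ t *ᵥ y)) := by
        simpa using sum_abs_le_sqrt_card_mul_sqrt_dotProduct_self (P ^ t *ᵥ y)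
    _ ≤ √n * sigma2 P ^ t := by
        gcongr
        exact (Real.sqrt_le_left (pow_nonneg (sigma2_nonneg P) t)).2 hσ
    _ = sigma2 P ^ t * √n := mul_comm _ _
end

section
/- Let P ∈ ℝ^{n×n} be a doubly stochastic matrix and let u_{i,t} ∈ ℝ^d for i ∈ [n] and t ≥ 1 be arbitrary vectors. Define sequences z_{i,t} ∈ ℝ^d by z_{i,1} = 0 for all i and z_{i,t+1} = Σ_{j=1}^n P_{ji} z_{j,t} + u_{i,t}, and let z̄_t = (1/n)Σ_{i=1}^n z_{i,t}. Then for every i ∈ [n] and t ≥ 1, z̄_t − z_{i,t} = Σ_{k=1}^{t−1} Σ_{j=1}^n (1/n − [P^{k−1}]_{ji}) u_{j,t−k}, where [P^{k−1}]_{ji} denotes the (j,i) entry of the (k−1)-st power of P. -/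
open Finset

private lemma rowsum_pow {n : ℕ} (P : Matrix (Fin n) (Fin n) ℝ)
    (hrow : ∀ i, ∑ j, P i j = 1) (k : ℕ) (j : Fin n) :
    ∑ i, (P ^ k) j i = 1 := by
  induction k with
  | zero =>
      simp [Matrix.one_apply]
  | succ k ih =>
      rw [pow_succ]
      simp only [Matrix.mul_apply]
      rw [Finset.sum_comm]
      calc ∑ l, ∑ i, (P ^ k) j l * P l i
          = ∑ l, (P ^ k) j l * ∑ i, P l i := by
            simp [Finset.mul_sum]
        _ = 1 := by simp [hrow, ih]

private lemma closed_form {n d : ℕ} (P : Matrix (Fin n) (Fin n) ℝ)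
    (u z : Fin n → ℕ → EuclideanSpace ℝ (Fin d))
    (hz1 : ∀ i, z i 1 = 0)
    (hrec : ∀ i : Fin n, ∀ t : ℕ, 1 ≤ t →
      z i (t + 1) = (∑ j, P j i • z j t) + u i t)
    (t : ℕ) (ht : 1 ≤ t) (i : Fin n) :
    z i t = ∑ k ∈ Finset.range (t - 1), ∑ j, ((P ^ k) j i) • u j (t - 1 - k) := by
  induction t, ht using Nat.le_induction generalizing i with
  | base => simp [hz1]
  | succ t ht ih =>
      obtain ⟨s, rfl⟩ : ∃ s, t = s + 1 := ⟨t - 1, (Nat.succ_pred_eq_of_pos ht).symm⟩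
      rw [hrec i (s + 1) (by omega)]
      have hzt : ∀ j, z j (s + 1) = ∑ k ∈ Finset.range s, ∑ l, ((P ^ k) l j) • u l (s - k) := by
        intro j
        simpa using ih j
      simp only [hzt]
      have key : (∑ j, P j i • ∑ k ∈ Finset.range s, ∑ l, ((P ^ k) l j) • u l (s - k))
          = ∑ k ∈ Finset.range s, ∑ l, ((P ^ (k + 1)) l i) • u l (s - k) := by
        simp only [Finset.smul_sum]
        rw [Finset.sum_comm]
        refine Finset.sum_congr rfl fun k _ => ?_
        rw [Finset.sum_comm]
        refine Finset.sum_congr rfl fun l _ => ?_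
        rw [pow_succ, Matrix.mul_apply, Finset.sum_smul]
        refine Finset.sum_congr rfl fun j _ => ?_
        rw [smul_smul, mul_comm]
      rw [key]
      simp only [Nat.add_sub_cancel]
      rw [Finset.sum_range_succ']
      congr 1
      · refine Finset.sum_congr rfl fun k hk => ?_
        refine Finset.sum_congr rfl fun j _ => ?_
        have e : s + 1 - (k + 1) = s - k := by omega
        rw [e]
      · simp [Matrix.one_apply]

/-- unrolled form of the perturbed consensus recursion
`z_{i,t+1} = Σ_j P_{ji} z_{j,t} + u_{i,t}` with `z_{i,1} = 0`:
`z̄_t - z_{i,t} = Σ_{k=1}^{t-1} Σ_j (1/n - [P^{k-1}]_{ji}) u_{j,t-k}`. -/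
theorem stmt_5 {n d : ℕ} (P : Matrix (Fin n) (Fin n) ℝ)
    (hnonneg : ∀ i j, 0 ≤ P i j)
    (hrow : ∀ i, ∑ j, P i j = 1)
    (hcol : ∀ j, ∑ i, P i j = 1)
    (u z : Fin n → ℕ → EuclideanSpace ℝ (Fin d))
    (hz1 : ∀ i, z i 1 = 0)
    (hrec : ∀ i : Fin n, ∀ t : ℕ, 1 ≤ t →
      z i (t + 1) = (∑ j, P j i • z j t) + u i t)
    (i : Fin n) (t : ℕ) (ht : 1 ≤ t) :
    (n : ℝ)⁻¹ • (∑ j, z j t) - z i t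
      = ∑ k ∈ Finset.Icc 1 (t - 1), ∑ j, ((n : ℝ)⁻¹ - (P ^ (k - 1)) j i) • u j (t - k) := by
  have hcf := closed_form P u z hz1 hrec t ht
  -- convert RHS Icc sum to range sum
  have hIcc : ∑ k ∈ Finset.Icc 1 (t - 1), ∑ j, ((n : ℝ)⁻¹ - (P ^ (k - 1)) j i) • u j (t - k)
      = ∑ k ∈ Finset.range (t - 1), ∑ j, ((n : ℝ)⁻¹ - (P ^ k) j i) • u j (t - 1 - k) := by
    have h1 : Finset.Icc 1 (t - 1) = Finset.Ico 1 t := by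
      rw [← Finset.Ico_add_one_right_eq_Icc]
      congr 1
      omega
    rw [h1, Finset.sum_Ico_eq_sum_range]
    refine Finset.sum_congr (by congr 1) fun k hk => ?_
    have e1 : 1 + k - 1 = k := by omega
    have e2 : t - (1 + k) = t - 1 - k := by omega
    rw [e1, e2]
  rw [hIcc]
  -- sum of z over all nodes
  have hsum : (∑ j, z j t) = ∑ k ∈ Finset.range (t - 1), ∑ j, u j (t - 1 - k) := by
    simp only [fun j => hcf j]
    rw [Finset.sum_comm]
    refine Finset.sum_congr rfl fun k _ => ?_
    rw [Finset.sum_comm]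
    refine Finset.sum_congr rfl fun l _ => ?_
    rw [← Finset.sum_smul, rowsum_pow P hrow k l, one_smul]
  rw [hsum, hcf i]
  simp only [Finset.smul_sum, ← Finset.sum_sub_distrib]
  refine Finset.sum_congr rfl fun k _ => Finset.sum_congr rfl fun j _ => ?_
  rw [sub_smul]
end

section
/- Let H be a real inner product space, let ρ > 0, let (r_t)_{t=1}^T be vectors in H, and define λ_1 = 0 and λ_{t+1} = λ_t + ρ·r_t for t = 1, …, T. Then for every λ* ∈ H: Σ_{t=1}^T ⟨λ* − λ_{t+1}, r_t⟩ ≤ (1/ρ)·‖λ*‖·‖λ_{T+1}‖ − (ρ/2)·Σ_{t=1}^T ‖r_t‖². -/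
open scoped RealInnerProductSpace

/-- telescoping estimate for the dual updates `λ_{t+1} = λ_t + ρ r_t`
with `λ_1 = 0`:
`Σ_{t=1}^T ⟨λ* - λ_{t+1}, r_t⟩ ≤ (1/ρ) ‖λ*‖ ‖λ_{T+1}‖ - (ρ/2) Σ_{t=1}^T ‖r_t‖²`. -/
theorem stmt_15 {H : Type*} [NormedAddCommGroup H] [InnerProductSpace ℝ H]
    (ρ : ℝ) (hρ : 0 < ρ) (T : ℕ) (r lam : ℕ → H)
    (hlam1 : lam 1 = 0)
    (hrec : ∀ t ∈ Finset.Icc 1 T, lam (t + 1) = lam t + ρ • r t)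
    (lamstar : H) :
    ∑ t ∈ Finset.Icc 1 T, ⟪lamstar - lam (t + 1), r t⟫
      ≤ 1 / ρ * ‖lamstar‖ * ‖lam (T + 1)‖
        - ρ / 2 * ∑ t ∈ Finset.Icc 1 T, ‖r t‖ ^ 2 := by
  have key : ∀ t ∈ Finset.Icc 1 T,
      ⟪lamstar - lam (t + 1), r t⟫
        = 1 / (2 * ρ) * (‖lamstar - lam t‖ ^ 2 - ‖lamstar - lam (t + 1)‖ ^ 2)
          - ρ / 2 * ‖r t‖ ^ 2 := by
    intro t ht
    rw [hrec t ht]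
    have h1 : ‖lamstar - (lam t + ρ • r t)‖ ^ 2
        = ‖(lamstar - lam t) - ρ • r t‖ ^ 2 := by rw [sub_add_eq_sub_sub]
    have expand : ‖(lamstar - lam t) - ρ • r t‖ ^ 2
        = ‖lamstar - lam t‖ ^ 2 - 2 * (ρ * ⟪lamstar - lam t, r t⟫) + ρ ^ 2 * ‖r t‖ ^ 2 := by
      rw [@norm_sub_sq_real, real_inner_smul_right, norm_smul, Real.norm_eq_abs,
        abs_of_pos hρ]
      ring
    rw [h1, expand, sub_add_eq_sub_sub, inner_sub_left, real_inner_smul_left,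
      real_inner_self_eq_norm_sq]
    field_simp
    ring
  rw [Finset.sum_congr rfl key, Finset.sum_sub_distrib, ← Finset.mul_sum, ← Finset.mul_sum]
  have tel : ∑ t ∈ Finset.Icc 1 T, (‖lamstar - lam t‖ ^ 2 - ‖lamstar - lam (t + 1)‖ ^ 2)
      = ‖lamstar - lam 1‖ ^ 2 - ‖lamstar - lam (T + 1)‖ ^ 2 := by
    rw [← Finset.Ico_add_one_right_eq_Icc, Finset.sum_Ico_eq_sum_range]
    have := Finset.sum_range_sub' (fun i => ‖lamstar - lam (1 + i)‖ ^ 2) T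
    simpa [add_comm, add_assoc, add_left_comm] using this
  rw [tel, hlam1, sub_zero]
  have hcs : ‖lamstar‖ ^ 2 - ‖lamstar - lam (T + 1)‖ ^ 2 ≤ 2 * (‖lamstar‖ * ‖lam (T + 1)‖) := by
    rw [@norm_sub_sq_real]
    have := real_inner_le_norm lamstar (lam (T + 1))
    nlinarith [sq_nonneg (‖lam (T + 1)‖)]
  have h2ρ : (0:ℝ) < 1 / (2 * ρ) := by positivity
  have hm := mul_le_mul_of_nonneg_left hcs (le_of_lt h2ρ)
  have heq : 1 / (2 * ρ) * (2 * (‖lamstar‖ * ‖lam (T + 1)‖))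
      = 1 / ρ * ‖lamstar‖ * ‖lam (T + 1)‖ := by
    field_simp
  linarith [heq ▸ hm]
end

section
/- Let P ∈ ℝ^{n×n} be a doubly stochastic matrix and let u_{i,t} ∈ ℝ^d for i ∈ [n], t ≥ 1. Define z_{i,1} = 0, z_{i,t+1} = Σ_{j=1}^n P_{ji} z_{j,t} + u_{i,t}, and z̄_t = (1/n)Σ_{i=1}^n z_{i,t}. Then for every i ∈ [n] and t ≥ 1, ‖z̄_t − z_{i,t}‖ ≤ Σ_{k=1}^{t−1} (max_{j∈[n]} ‖u_{j,t−k}‖)·‖P^{k−1}e_i − (1/n)𝟏‖₁, where e_i is the i-th standard basis vector, 𝟏 the all-ones vector, ‖·‖₁ the ℓ¹ norm on ℝ^n, and ‖·‖ the Euclidean norm on ℝ^d. -/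
open Finset

/-- ℓ¹-mixing bound for the perturbed consensus recursion
`z_{i,t+1} = Σ_j P_{ji} z_{j,t} + u_{i,t}` with `z_{i,1} = 0`:
`‖z̄_t - z_{i,t}‖ ≤ Σ_{k=1}^{t-1} (max_j ‖u_{j,t-k}‖) ‖P^{k-1} e_i - 𝟏/n‖₁`. -/
theorem stmt_18 {n d : ℕ} (P : Matrix (Fin n) (Fin n) ℝ)
    (hnonneg : ∀ i j, 0 ≤ P i j)
    (hrow : ∀ i, ∑ j, P i j = 1)
    (hcol : ∀ j, ∑ i, P i j = 1)
    (u z : Fin n → ℕ → EuclideanSpace ℝ (Fin d))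
    (hz1 : ∀ i, z i 1 = 0)
    (hrec : ∀ i : Fin n, ∀ t : ℕ, 1 ≤ t →
      z i (t + 1) = (∑ j, P j i • z j t) + u i t)
    (i : Fin n) (t : ℕ) (ht : 1 ≤ t) :
    ‖(n : ℝ)⁻¹ • (∑ j, z j t) - z i t‖
      ≤ ∑ k ∈ Finset.Icc 1 (t - 1),
          (Finset.univ.sup' ⟨i, Finset.mem_univ i⟩ fun j : Fin n => ‖u j (t - k)‖)
            * ∑ j, |(P ^ (k - 1)).mulVec (Pi.single i 1) j - 1 / n| := by
  -- row sums of powers of P are 1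
  have hrowpow : ∀ m : ℕ, ∀ l, ∑ j, (P ^ m) l j = 1 := by
    intro m
    induction m with
    | zero =>
      intro l; simp [Matrix.one_apply]
    | succ m ih =>
      intro l
      rw [pow_succ]
      simp only [Matrix.mul_apply]
      calc ∑ j, ∑ a, (P ^ m) l a * P a j
          = ∑ a, ∑ j, (P ^ m) l a * P a j := Finset.sum_comm
        _ = ∑ a, (P ^ m) l a * ∑ j, P a j := by simp [Finset.mul_sum]
        _ = ∑ a, (P ^ m) l a := by simp [hrow]
        _ = 1 := ih l
  -- closed form for z
  have hform : ∀ t : ℕ, 1 ≤ t → ∀ i : Fin n,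
      z i t = ∑ s ∈ Icc 1 (t - 1), ∑ l, (P ^ (t - 1 - s)) l i • u l s := by
    intro t
    induction t with
    | zero => omega
    | succ t ih =>
      intro _ i
      by_cases h0 : t = 0
      · subst h0; simpa using hz1 i
      · have ht1 : 1 ≤ t := Nat.one_le_iff_ne_zero.mpr h0
        rw [hrec i t ht1]
        have hstep : (∑ j, P j i • z j t)
            = ∑ s ∈ Icc 1 (t - 1), ∑ l, (P ^ (t - s)) l i • u l s := by
          have h1 : (∑ j, P j i • z j t)
              = ∑ j, ∑ s ∈ Icc 1 (t - 1), ∑ l, (P j i * (P ^ (t - 1 - s)) l j) • u l s := by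
            refine Finset.sum_congr rfl fun j _ => ?_
            rw [ih ht1 j, Finset.smul_sum]
            refine Finset.sum_congr rfl fun s _ => ?_
            rw [Finset.smul_sum]
            exact Finset.sum_congr rfl fun l _ => smul_smul _ _ _
          rw [h1, Finset.sum_comm]
          refine Finset.sum_congr rfl fun s hs => ?_
          rw [Finset.sum_comm]
          refine Finset.sum_congr rfl fun l _ => ?_
          rw [← Finset.sum_smul]
          congr 1
          have hs' := Finset.mem_Icc.mp hs
          have hts : t - s = (t - 1 - s) + 1 := by omega
          rw [hts, pow_succ, Matrix.mul_apply]
          exact Finset.sum_congr rfl fun j _ => mul_comm _ _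
        have htop : ∑ s ∈ Icc 1 (t + 1 - 1), ∑ l, (P ^ (t + 1 - 1 - s)) l i • u l s
            = (∑ s ∈ Icc 1 (t - 1), ∑ l, (P ^ (t - s)) l i • u l s)
              + ∑ l, ((P ^ (t - t)) l i) • u l t := by
          have h1 : t + 1 - 1 = (t - 1) + 1 := by omega
          rw [h1, Finset.sum_Icc_succ_top (by omega : 1 ≤ (t - 1) + 1)]
          have h2 : t - 1 + 1 = t := by omega
          rw [h2]
        rw [hstep, htop]
        congr 1
        simp [Nat.sub_self, Matrix.one_apply]
  -- average formula
  have havg : (n : ℝ)⁻¹ • (∑ j, z j t)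
      = ∑ s ∈ Icc 1 (t - 1), ∑ l, (n : ℝ)⁻¹ • u l s := by
    have hsum : (∑ j, z j t) = ∑ s ∈ Icc 1 (t - 1), ∑ l, u l s := by
      calc (∑ j, z j t)
          = ∑ j, ∑ s ∈ Icc 1 (t - 1), ∑ l, (P ^ (t - 1 - s)) l j • u l s :=
            Finset.sum_congr rfl fun j _ => hform t ht j
        _ = ∑ s ∈ Icc 1 (t - 1), ∑ l, ∑ j : Fin n, (P ^ (t - 1 - s)) l j • u l s := by
            rw [Finset.sum_comm]
            exact Finset.sum_congr rfl fun s _ => Finset.sum_comm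
        _ = ∑ s ∈ Icc 1 (t - 1), ∑ l, u l s := by
            refine Finset.sum_congr rfl fun s _ => Finset.sum_congr rfl fun l _ => ?_
            rw [← Finset.sum_smul, hrowpow, one_smul]
    rw [hsum, Finset.smul_sum]
    exact Finset.sum_congr rfl fun s _ => Finset.smul_sum
  -- the difference
  have hdiff : (n : ℝ)⁻¹ • (∑ j, z j t) - z i t
      = ∑ s ∈ Icc 1 (t - 1), ∑ l, ((n : ℝ)⁻¹ - (P ^ (t - 1 - s)) l i) • u l s := by
    rw [havg, hform t ht i, ← Finset.sum_sub_distrib]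
    refine Finset.sum_congr rfl fun s _ => ?_
    rw [← Finset.sum_sub_distrib]
    exact Finset.sum_congr rfl fun l _ => (sub_smul _ _ _).symm
  set M : ℕ → ℝ := fun s =>
    Finset.univ.sup' ⟨i, Finset.mem_univ i⟩ fun j : Fin n => ‖u j s‖ with hM
  -- bound
  have hbound : ‖(n : ℝ)⁻¹ • (∑ j, z j t) - z i t‖
      ≤ ∑ s ∈ Icc 1 (t - 1), M s * ∑ l, |(n : ℝ)⁻¹ - (P ^ (t - 1 - s)) l i| := by
    rw [hdiff]
    refine (norm_sum_le _ _).trans (Finset.sum_le_sum fun s _ => ?_)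
    calc ‖∑ l, ((n : ℝ)⁻¹ - (P ^ (t - 1 - s)) l i) • u l s‖
        ≤ ∑ l, ‖((n : ℝ)⁻¹ - (P ^ (t - 1 - s)) l i) • u l s‖ := norm_sum_le _ _
      _ = ∑ l, |(n : ℝ)⁻¹ - (P ^ (t - 1 - s)) l i| * ‖u l s‖ := by
          simp [norm_smul, Real.norm_eq_abs]
      _ ≤ ∑ l, |(n : ℝ)⁻¹ - (P ^ (t - 1 - s)) l i| * M s :=
          Finset.sum_le_sum fun l _ =>
            mul_le_mul_of_nonneg_left
              (Finset.le_sup' (fun j : Fin n => ‖u j s‖) (Finset.mem_univ l))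
              (abs_nonneg _)
      _ = M s * ∑ l, |(n : ℝ)⁻¹ - (P ^ (t - 1 - s)) l i| := by
          rw [← Finset.sum_mul, mul_comm]
  refine hbound.trans_eq ?_
  -- reindex s ↦ t - s
  have hmv : ∀ (m : ℕ) (j : Fin n), (P ^ m).mulVec (Pi.single i 1) j = (P ^ m) j i := by
    intro m j
    simp [Matrix.mulVec, dotProduct, Pi.single_apply, mul_ite]
  refine Finset.sum_nbij' (fun s => t - s) (fun k => t - k) ?_ ?_ ?_ ?_ ?_
  · intro s hs
    simp only [Finset.mem_Icc] at hs ⊢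
    omega
  · intro k hk
    simp only [Finset.mem_Icc] at hk ⊢
    omega
  · intro s hs
    simp only [Finset.mem_Icc] at hs
    show t - (t - s) = s
    omega
  · intro k hk
    simp only [Finset.mem_Icc] at hk
    show t - (t - k) = k
    omega
  · intro s hs
    have hs' := Finset.mem_Icc.mp hs
    beta_reduce
    have h1 : t - (t - s) = s := by omega
    have h2 : t - s - 1 = t - 1 - s := by omega
    rw [h1, h2]
    congr 1
    refine Finset.sum_congr rfl fun j _ => ?_
    rw [hmv, abs_sub_comm, one_div]
end

section
/- Let P ∈ ℝ^{n×n} be a doubly stochastic matrix, let χ ⊆ ℝ^d be a closed convex set containing 0 with Euclidean projection Π_χ, let (α_t)_{t≥1} be real numbers, and let u_{i,t} ∈ ℝ^d for i ∈ [n], t ≥ 1. Define x_{i,1} = 0, h_{i,t+1} = Σ_{j=1}^n P_{ji} x_{j,t} − α_t u_{i,t}, x_{i,t+1} = Π_χ(h_{i,t+1}), r_{i,t+1} = x_{i,t+1} − h_{i,t+1}, and θ_t = (1/n)Σ_{i=1}^n x_{i,t}. Then for every i ∈ [n] and t ≥ 1, θ_t − x_{i,t} = Σ_{k=1}^{t−1}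 Σ_{j=1}^n (1/n − [P^{k−1}]_{ji})·(r_{j,t−k+1} − α_{t−k} u_{j,t−k}), where [P^{k−1}]_{ji} denotes the (j,i) entry of the (k−1)-st power of P. -/
/-!
Writing `w_{i,t} = r_{i,t+1} - α_t u_{i,t}`, the definitions of `h` and `r` turn the projected
iteration into the linear recursion `x_{t+1} = Pᵀ x_t + w_t` with `x_1 = 0`, whose solution is
`x_{i,t} = Σ_{k=1}^{t-1} Σ_j [P^{k-1}]_{ji} w_{j,t-k}`. Every power of `P` has unit row sums, so
averaging over `i` gives `θ_t = (1/n) Σ_{k=1}^{t-1} Σ_j w_{j,t-k}`, and subtracting yields the identity.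
-/

open Finset

namespace Matrix

variable {ι R M : Type*} [Fintype ι] [DecidableEq ι]

theorem pow_mulVec_eq_self [Semiring R] {P : Matrix ι ι R} {v : ι → R} (hv : P *ᵥ v = v)
    (k : ℕ) : (P ^ k) *ᵥ v = v := by
  induction k with
  | zero => simp
  | succ k ih => rw [pow_succ, ← mulVec_mulVec, hv, ih]

theorem sum_pow_apply_eq_one [Semiring R] {P : Matrix ι ι R} (hP : ∀ i, ∑ j, P i j = 1)
    (k : ℕ) (i : ι) : ∑ j, (P ^ k) i j = 1 := by
  have hP1 : P *ᵥ 1 = 1 := funext fun i => by simp [mulVec, dotProduct, hP]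
  simpa [mulVec, dotProduct] using congrFun (pow_mulVec_eq_self hP1 k) i

theorem eq_sum_pow_smul_of_recursion [CommSemiring R] [AddCommMonoid M] [Module R M]
    (P : Matrix ι ι R) {x w : ι → ℕ → M} (hx0 : ∀ i, x i 0 = 0)
    (hstep : ∀ i s, x i (s + 1) = ∑ j, P j i • x j s + w i s) (i : ι) (s : ℕ) :
    x i s = ∑ k ∈ range s, ∑ j, (P ^ k) j i • w j (s - 1 - k) := by
  induction s generalizing i with
  | zero => simp [hx0]
  | succ s ih =>
    rw [sum_range_succ', hstep]
    simp only [ih, smul_sum, smul_smul, pow_zero, one_apply, ite_smul, one_smul, zero_smul,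
      sum_ite_eq', mem_univ, if_true, Nat.add_sub_cancel, Nat.sub_zero]
    congr 1
    rw [sum_comm]
    refine sum_congr rfl fun k _ => ?_
    rw [sum_comm]
    refine sum_congr rfl fun m _ => ?_
    rw [← sum_smul, pow_succ, mul_apply, Nat.sub_sub, add_comm 1 k]
    simp only [mul_comm]

theorem average_sub_eq_sum_of_recursion [Field R] [AddCommGroup M] [Module R M]
    {P : Matrix ι ι R} (hP : ∀ i, ∑ j, P i j = 1) {x w : ι → ℕ → M} (hx0 : ∀ i, x i 0 = 0)
    (hstep : ∀ i s, x i (s + 1) = ∑ j, P j i • x j s + w i s) (i : ι) (s : ℕ) :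
    (Fintype.card ι : R)⁻¹ • ∑ j, x j s - x i s
      = ∑ k ∈ range s, ∑ j, ((Fintype.card ι : R)⁻¹ - (P ^ k) j i) • w j (s - 1 - k) := by
  have hsum : ∑ j, x j s = ∑ k ∈ range s, ∑ j, w j (s - 1 - k) := by
    simp only [eq_sum_pow_smul_of_recursion P hx0 hstep]
    rw [sum_comm]
    refine sum_congr rfl fun k _ => ?_
    rw [sum_comm]
    simp only [← sum_smul, sum_pow_apply_eq_one hP, one_smul]
  rw [hsum, eq_sum_pow_smul_of_recursion P hx0 hstep, smul_sum, ← sum_sub_distrib]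
  simp only [smul_sum, sub_smul, sum_sub_distrib]

end Matrix

theorem stmt_19_general {n d : ℕ} (P : Matrix (Fin n) (Fin n) ℝ)
    (hrow : ∀ i, ∑ j, P i j = 1)
    (α : ℕ → ℝ)
    (u x h r : Fin n → ℕ → EuclideanSpace ℝ (Fin d))
    (θ : ℕ → EuclideanSpace ℝ (Fin d))
    (hx1 : ∀ i, x i 1 = 0)
    (hhrec : ∀ i : Fin n, ∀ t : ℕ, 1 ≤ t →
      h i (t + 1) = (∑ j, P j i • x j t) - α t • u i t)
    (hr : ∀ i : Fin n, ∀ t : ℕ, 1 ≤ t → r i (t + 1) = x i (t + 1) - h i (t + 1))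
    (hθ : ∀ t : ℕ, θ t = (n : ℝ)⁻¹ • ∑ i, x i t)
    (i : Fin n) (t : ℕ) (ht : 1 ≤ t) :
    θ t - x i t
      = ∑ k ∈ Finset.Icc 1 (t - 1), ∑ j,
          ((n : ℝ)⁻¹ - (P ^ (k - 1)) j i) • (r j (t - k + 1) - α (t - k) • u j (t - k)) := by
  obtain ⟨s, rfl⟩ : ∃ s, t = s + 1 := ⟨t - 1, by omega⟩
  have hstep : ∀ j s, x j (s + 1 + 1)
      = ∑ m, P m j • x m (s + 1) + (r j (s + 1 + 1) - α (s + 1) • u j (s + 1)) := by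
    intro j s
    rw [hr j _ le_add_self, hhrec j _ le_add_self]
    abel
  have hunrolled := Matrix.average_sub_eq_sum_of_recursion hrow (x := fun j s => x j (s + 1))
    hx1 hstep i s
  rw [Fintype.card_fin, ← hθ] at hunrolled
  rw [hunrolled, Nat.add_sub_cancel, ← Ico_add_one_right_eq_Icc, sum_Ico_eq_sum_range,
    Nat.add_sub_cancel]
  refine sum_congr rfl fun k hk => ?_
  obtain ⟨m, rfl⟩ : ∃ m, s = k + 1 + m := ⟨s - (k + 1), by have := mem_range.mp hk; omega⟩
  rw [show k + 1 + m - 1 - k + 1 = m + 1 by omega, show k + 1 + m + 1 - (1 + k) = m + 1 by omega,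
    Nat.add_sub_cancel_left]

/-- unrolled form of the projected perturbed consensus recursion
`h_{i,t+1} = Σ_j P_{ji} x_{j,t} - α_t u_{i,t}`, `x_{i,t+1} = Π_χ(h_{i,t+1})`,
`r_{i,t+1} = x_{i,t+1} - h_{i,t+1}`, with `x_{i,1} = 0`:
`θ_t - x_{i,t} = Σ_{k=1}^{t-1} Σ_j (1/n - [P^{k-1}]_{ji}) (r_{j,t-k+1} - α_{t-k} u_{j,t-k})`. -/
theorem stmt_19 {n d : ℕ} (P : Matrix (Fin n) (Fin n) ℝ)
    (hnonneg : ∀ i j, 0 ≤ P i j)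
    (hrow : ∀ i, ∑ j, P i j = 1)
    (hcol : ∀ j, ∑ i, P i j = 1)
    (χ : Set (EuclideanSpace ℝ (Fin d)))
    (hcl : IsClosed χ) (hconv : Convex ℝ χ) (hχ0 : (0 : EuclideanSpace ℝ (Fin d)) ∈ χ)
    (proj : EuclideanSpace ℝ (Fin d) → EuclideanSpace ℝ (Fin d))
    (hprojmem : ∀ u, proj u ∈ χ)
    (hprojclosest : ∀ u, ∀ v ∈ χ, ‖u - proj u‖ ≤ ‖u - v‖)
    (α : ℕ → ℝ)
    (u x h r : Fin n → ℕ → EuclideanSpace ℝ (Fin d))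
    (θ : ℕ → EuclideanSpace ℝ (Fin d))
    (hx1 : ∀ i, x i 1 = 0)
    (hhrec : ∀ i : Fin n, ∀ t : ℕ, 1 ≤ t →
      h i (t + 1) = (∑ j, P j i • x j t) - α t • u i t)
    (hxproj : ∀ i : Fin n, ∀ t : ℕ, 1 ≤ t → x i (t + 1) = proj (h i (t + 1)))
    (hr : ∀ i : Fin n, ∀ t : ℕ, 1 ≤ t → r i (t + 1) = x i (t + 1) - h i (t + 1))
    (hθ : ∀ t : ℕ, θ t = (n : ℝ)⁻¹ • ∑ i, x i t)
    (i : Fin n) (t : ℕ) (ht : 1 ≤ t) :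
    θ t - x i t
      = ∑ k ∈ Finset.Icc 1 (t - 1), ∑ j,
          ((n : ℝ)⁻¹ - (P ^ (k - 1)) j i) • (r j (t - k + 1) - α (t - k) • u j (t - k)) :=
  stmt_19_general P hrow α u x h r θ hx1 hhrec hr hθ i t ht
end
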